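/- arXiv:math/0603269 — 7 statements merged into one kernel-verified Lean document; each statement's English description precedes it below -/
import Mathlib

section
/- Let D = D(Γ, (g_i), (χ_i), (a_{ij})) be a datum of finite Cartan type with θ vertices and braiding matrix q_{ij} = χ_j(g_i). Let κ ≥ 1 and let i_1, …, i_κ ∈ {1,…,θ} be a sequence with i_l ≠ i_{l+1} and a_{i_l i_{l+1}} ≠ 0 for all 1 ≤ l < κ. Then q_{i_1 i_1}^{A} = q_{i_κ i_κ}^{B} in k^×, where A = a_{i_1 i_2} a_{i_2 i_3} ⋯ a_{i_{κ−1} i_κ} and B = a_{i_2 i_1} a_{i_3 i_2} ⋯ a_{i_κ i_{κ−1}} are (possibly negative) integers, empty products being equal to 1. -/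
open scoped BigOperators

/-- `a` is a Cartan matrix of finite type: diagonal entries `2`, off-diagonal entries `≤ 0`,
`a i j = 0 ↔ a j i = 0`, and there are positive integers `d i` symmetrizing `a` such that the
symmetrized matrix is positive definite. -/
def IsFiniteCartanMatrix {θ : ℕ} (a : Fin θ → Fin θ → ℤ) : Prop :=
  (∀ i, a i i = 2) ∧
  (∀ i j, i ≠ j → a i j ≤ 0) ∧
  (∀ i j, (a i j = 0 ↔ a j i = 0)) ∧
  ∃ d : Fin θ → ℤ, (∀ i, 0 < d i) ∧ (∀ i j, d i * a i j = d j * a j i) ∧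
    (Matrix.of fun i j => ((d i * a i j : ℤ) : ℝ)).PosDef

/-- `D(Γ, (g i), (χ i), (a i j))` is a datum of finite Cartan type: with `q i j = χ j (g i)`,
one has `q i j * q j i = (q i i) ^ (a i j)` and `q i i ≠ 1`. -/
def IsCartanDatum {k : Type*} [Field k] {Γ : Type*} [CommGroup Γ] {θ : ℕ}
    (g : Fin θ → Γ) (χ : Fin θ → Γ →* kˣ) (a : Fin θ → Fin θ → ℤ) : Prop :=
  IsFiniteCartanMatrix a ∧
  (∀ i j, χ j (g i) * χ i (g j) = χ i (g i) ^ (a i j)) ∧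
  (∀ i, χ i (g i) ≠ 1)

theorem statement0 {k : Type*} [Field k] [IsAlgClosed k] [CharZero k]
    {Γ : Type*} [CommGroup Γ] {θ : ℕ}
    (g : Fin θ → Γ) (χ : Fin θ → Γ →* kˣ) (a : Fin θ → Fin θ → ℤ)
    (hD : IsCartanDatum g χ a)
    (κ : ℕ) (hκ : 1 ≤ κ) (i : ℕ → Fin θ)
    (hstep : ∀ l, l + 1 < κ → i l ≠ i (l + 1) ∧ a (i l) (i (l + 1)) ≠ 0) :
    χ (i 0) (g (i 0)) ^ (∏ l ∈ Finset.range (κ - 1), a (i l) (i (l + 1))) =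
      χ (i (κ - 1)) (g (i (κ - 1))) ^ (∏ l ∈ Finset.range (κ - 1), a (i (l + 1)) (i l)) := by
  have key : ∀ p q : Fin θ, χ p (g p) ^ (a p q) = χ q (g q) ^ (a q p) := by
    intro p q
    rw [← hD.2.1 p q, ← hD.2.1 q p, mul_comm]
  have main : ∀ n : ℕ,
      χ (i 0) (g (i 0)) ^ (∏ l ∈ Finset.range n, a (i l) (i (l + 1))) =
        χ (i n) (g (i n)) ^ (∏ l ∈ Finset.range n, a (i (l + 1)) (i l)) := by
    intro n
    induction n with
    | zero => simp
    | succ n ih =>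
      rw [Finset.prod_range_succ, Finset.prod_range_succ, zpow_mul, ih, ← zpow_mul,
        mul_comm, zpow_mul, key (i n) (i (n + 1)), ← zpow_mul, mul_comm]
  exact main (κ - 1)
end

section
/- Let D = D(Γ, (g_i), (χ_i), (a_{ij})) be a datum of finite Cartan type and suppose the vertices i and j are linkable, i.e. i ≁ j, g_i g_j ≠ 1, and χ_i χ_j = ε. Then q_{ii} = q_{jj}^{−1}. -/
open scoped BigOperators

/-- The Dynkin graph of the Cartan matrix `a`: an edge between `i ≠ j` iff `a i j ≠ 0`. -/
def dynkinGraph {θ : ℕ} (a : Fin θ → Fin θ → ℤ) : SimpleGraph (Fin θ) :=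
  SimpleGraph.fromRel fun i j => a i j ≠ 0

/-- Vertices `i, j` are linkable: `i ≁ j` (they lie in different connected components of the
Dynkin graph), `g i * g j ≠ 1`, and `χ i * χ j = ε`. -/
def Linkable {k : Type*} [Field k] {Γ : Type*} [CommGroup Γ] {θ : ℕ}
    (g : Fin θ → Γ) (χ : Fin θ → Γ →* kˣ) (a : Fin θ → Fin θ → ℤ) (i j : Fin θ) : Prop :=
  ¬ (dynkinGraph a).Reachable i j ∧ g i * g j ≠ 1 ∧ χ i * χ j = 1

theorem entry_eq_zero_of_not_reachable_dynkinGraph {θ : ℕ} {a : Fin θ → Fin θ → ℤ} {i j : Fin θ}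
    (h : ¬ (dynkinGraph a).Reachable i j) : a i j = 0 := by
  by_contra hij
  have hne : i ≠ j := by
    rintro rfl
    exact h (.refl i)
  exact h (SimpleGraph.Adj.reachable ⟨hne, Or.inl hij⟩)

theorem MonoidHom.apply_eq_inv_of_mul_eq_one {G M : Type*} [MulOneClass G] [CommGroup M]
    {χ ψ : G →* M} (h : χ * ψ = 1) (x : G) : ψ x = (χ x)⁻¹ :=
  eq_inv_of_mul_eq_one_right (by simpa using DFunLike.congr_fun h x)

theorem statement1_general {k : Type*} [Field k]
    {Γ : Type*} [CommGroup Γ] {θ : ℕ}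
    (g : Fin θ → Γ) (χ : Fin θ → Γ →* kˣ) (a : Fin θ → Fin θ → ℤ)
    (hD : IsCartanDatum g χ a)
    (i j : Fin θ) (hlink : Linkable g χ a i j) :
    χ i (g i) = (χ j (g j))⁻¹ := by
  obtain ⟨hreach, -, hχ⟩ := hlink
  have hχ' : χ j * χ i = 1 := mul_comm (χ i) (χ j) ▸ hχ
  have hq := hD.2.1 i j
  rw [entry_eq_zero_of_not_reachable_dynkinGraph hreach, zpow_zero,
    MonoidHom.apply_eq_inv_of_mul_eq_one hχ (g i),
    MonoidHom.apply_eq_inv_of_mul_eq_one hχ' (g j)] at hq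
  exact inv_mul_eq_one.mp hq

theorem statement1 {k : Type*} [Field k] [IsAlgClosed k] [CharZero k]
    {Γ : Type*} [CommGroup Γ] {θ : ℕ}
    (g : Fin θ → Γ) (χ : Fin θ → Γ →* kˣ) (a : Fin θ → Fin θ → ℤ)
    (hD : IsCartanDatum g χ a)
    (i j : Fin θ) (hlink : Linkable g χ a i j) :
    χ i (g i) = (χ j (g j))⁻¹ :=
  statement1_general g χ a hD i j hlink
end

section
/- Let D = D(Γ, (g_i), (χ_i), (a_{ij})) be a datum of finite Cartan type such that for every 1 ≤ t ≤ θ the multiplicative order of q_{tt} is greater than 3 (possibly infinite). If the vertices i and k are linkable and the vertices j and l are linkable, then a_{ij} = a_{kl}. -/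
open scoped BigOperators

section Aux

variable {k : Type*} [Field k] {Γ : Type*} [CommGroup Γ] {θ : ℕ}

/-- If `u` has order `0` or `> 3` and `u ^ n = 1` with `|n| ≤ 3`, then `n = 0`. -/
lemma small_exp_aux (u : kˣ) (h : orderOf u = 0 ∨ 3 < orderOf u) {n : ℤ}
    (hn : u ^ n = 1) (hb : n.natAbs ≤ 3) : n = 0 := by
  have hd : (orderOf u : ℤ) ∣ n := orderOf_dvd_iff_zpow_eq_one.mpr hn
  have hd' : orderOf u ∣ n.natAbs :=
    Int.natCast_dvd_natCast.mp (Int.dvd_natAbs.mpr hd)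
  rcases h with h | h
  · rw [h] at hd'
    have : n.natAbs = 0 := Nat.eq_zero_of_zero_dvd hd'
    omega
  · rcases Nat.eq_zero_or_pos n.natAbs with h0 | h0
    · omega
    · have := Nat.le_of_dvd h0 hd'
      omega

/-- Product of off-diagonal symmetric pair entries is at most 3. -/
lemma offdiag_prod_le_three {a : Fin θ → Fin θ → ℤ} (hF : IsFiniteCartanMatrix a)
    {x y : Fin θ} (hxy : x ≠ y) : a x y * a y x ≤ 3 := by
  obtain ⟨hdiag, _hle, _hiff, d, hdpos, hsym, hPD⟩ := hF
  set M : Matrix (Fin θ) (Fin θ) ℝ := Matrix.of fun i j => ((d i * a i j : ℤ) : ℝ) with hM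
  set c1 : ℝ := -((d x * a x y : ℤ) : ℝ) with hc1
  set c2 : ℝ := 2 * ((d x : ℤ) : ℝ) with hc2
  set v : Fin θ → ℝ := Pi.single x c1 + Pi.single y c2 with hv
  have hdx : (0:ℝ) < ((d x : ℤ) : ℝ) := by exact_mod_cast hdpos x
  have hdy : (0:ℝ) < ((d y : ℤ) : ℝ) := by exact_mod_cast hdpos y
  have hvy : v y = c2 := by
    simp [hv, Pi.single_eq_of_ne (Ne.symm hxy)]
  have hv0 : v ≠ 0 := by
    intro h
    have := congrFun h y
    rw [hvy] at this
    simp only [Pi.zero_apply] at this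
    nlinarith
  have hpos := hPD.dotProduct_mulVec_pos hv0
  have hstar : star v = v := by
    funext t; simp
  rw [hstar] at hpos
  have hmv : M.mulVec v = (fun i => M i x * c1) + (fun i => M i y * c2) := by
    rw [hv, Matrix.mulVec_add, Matrix.mulVec_single, Matrix.mulVec_single]
    funext t; simp [Matrix.col_apply]; ring
  rw [hmv, hv] at hpos
  rw [add_dotProduct, single_dotProduct, single_dotProduct] at hpos
  simp only [Pi.add_apply] at hpos
  have hMxx : M x x = 2 * ((d x : ℤ) : ℝ) := by
    rw [hM]; simp only [Matrix.of_apply, hdiag x]; push_cast; ring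
  have hMyy : M y y = 2 * ((d y : ℤ) : ℝ) := by
    rw [hM]; simp only [Matrix.of_apply, hdiag y]; push_cast; ring
  have hMxy : M x y = ((d x * a x y : ℤ) : ℝ) := by rw [hM]; simp only [Matrix.of_apply]
  have hMyx : M y x = ((d x * a x y : ℤ) : ℝ) := by
    rw [hM]; simp only [Matrix.of_apply, ← hsym x y]
  rw [hMxx, hMyy, hMxy, hMyx] at hpos
  -- now hpos : 0 < c1 * (2dx * c1 + s * c2) + c2 * (s * c1 + 2dy * c2)
  have hs : ((d x * a x y : ℤ) : ℝ) * ((d y * a y x : ℤ) : ℝ) <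
      4 * ((d x : ℤ) : ℝ) * ((d y : ℤ) : ℝ) := by
    have hsym' : ((d y * a y x : ℤ) : ℝ) = ((d x * a x y : ℤ) : ℝ) := by
      exact_mod_cast congrArg (fun z : ℤ => (z : ℝ)) (hsym x y).symm
    rw [hsym']
    simp only [hc1, hc2] at hpos
    nlinarith [hpos, hdx, hdy, mul_pos hdx hdy]
  have hZ : d x * a x y * (d y * a y x) < 4 * d x * d y := by exact_mod_cast hs
  have hdx' := hdpos x
  have hdy' := hdpos y
  have hP : a x y * a y x < 4 := by nlinarith [hZ, mul_pos hdx' hdy']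
  omega

lemma offdiag_bounds {a : Fin θ → Fin θ → ℤ} (hF : IsFiniteCartanMatrix a)
    {x y : Fin θ} (hxy : x ≠ y) : -3 ≤ a x y ∧ a x y ≤ 0 := by
  have hle := hF.2.1
  have hiff := hF.2.2.1
  refine ⟨?_, hle x y hxy⟩
  by_cases h0 : a x y = 0
  · omega
  · have h1 : a y x ≠ 0 := fun h => h0 ((hiff x y).mpr h)
    have h2 : a y x ≤ 0 := hle y x (Ne.symm hxy)
    have h2' : a y x ≤ -1 := by omega
    have h3 : a x y ≤ 0 := hle x y hxy
    have h4 := offdiag_prod_le_three hF hxy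
    nlinarith [mul_nonneg (by linarith : (0:ℤ) ≤ -a x y) (by linarith : (0:ℤ) ≤ -a y x - 1)]

/-- Consequences of linkability. -/
lemma link_facts {g : Fin θ → Γ} {χ : Fin θ → Γ →* kˣ} {a : Fin θ → Fin θ → ℤ}
    (h : Linkable g χ a i j) :
    i ≠ j ∧ a i j = 0 ∧ a j i = 0 ∧ ∀ x, χ j x = (χ i x)⁻¹ := by
  obtain ⟨hnr, _, hχ⟩ := h
  have hne : i ≠ j := by
    rintro rfl; exact hnr (SimpleGraph.Reachable.refl i)
  have hz : a i j = 0 ∧ a j i = 0 := by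
    by_contra hcon
    have : (dynkinGraph a).Adj i j := by
      rw [dynkinGraph, SimpleGraph.fromRel_adj]
      refine ⟨hne, ?_⟩
      by_contra h'
      push_neg at h'
      exact hcon ⟨h'.1, h'.2⟩
    exact hnr this.reachable
  refine ⟨hne, hz.1, hz.2, fun x => ?_⟩
  have hx : χ i x * χ j x = 1 := by
    rw [← MonoidHom.mul_apply, hχ, MonoidHom.one_apply]
  exact eq_inv_of_mul_eq_one_right hx

/-- `χ j (g j) = χ i (g i)⁻¹` and `χ i (g j) = χ i (g i)` when `i, j` are linkable. -/
lemma link_q {g : Fin θ → Γ} {χ : Fin θ → Γ →* kˣ} {a : Fin θ → Fin θ → ℤ}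
    (hC : ∀ i j, χ j (g i) * χ i (g j) = χ i (g i) ^ (a i j))
    (h : Linkable g χ a i j) :
    χ i (g j) = χ i (g i) ∧ χ j (g j) = (χ i (g i))⁻¹ := by
  obtain ⟨_, hz, _, hinv⟩ := link_facts h
  have h1 : χ j (g i) * χ i (g j) = 1 := by
    rw [hC i j, hz, zpow_zero]
  rw [hinv (g i)] at h1
  have h2 : χ i (g j) = χ i (g i) := by
    have := eq_inv_of_mul_eq_one_right h1
    rwa [inv_inv] at this
  exact ⟨h2, by rw [hinv (g j), h2]⟩

lemma linkable_symm {g : Fin θ → Γ} {χ : Fin θ → Γ →* kˣ} {a : Fin θ → Fin θ → ℤ}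
    (h : Linkable g χ a i j) : Linkable g χ a j i :=
  ⟨fun hr => h.1 hr.symm,
   by rw [show g j * g i = g i * g j from mul_comm _ _]; exact h.2.1,
   by
     ext x
     have hx : χ i x * χ j x = 1 := by rw [← MonoidHom.mul_apply, h.2.2, MonoidHom.one_apply]
     rw [MonoidHom.mul_apply, MonoidHom.one_apply, mul_comm]
     exact congrArg Units.val hx⟩

/-- If `p` is linkable to both `q` and `r`, then `q = r`. -/
lemma link_unique {g : Fin θ → Γ} {χ : Fin θ → Γ →* kˣ} {a : Fin θ → Fin θ → ℤ}
    (hD : IsCartanDatum g χ a)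
    (hord : ∀ t : Fin θ, orderOf (χ t (g t)) = 0 ∨ 3 < orderOf (χ t (g t)))
    {p q r : Fin θ} (h1 : Linkable g χ a p q) (h2 : Linkable g χ a p r) : q = r := by
  obtain ⟨hF, hC, hne1⟩ := hD
  by_contra hqr
  set u := χ p (g p) with hu
  obtain ⟨hq1, hq2⟩ := link_q hC h1
  obtain ⟨hr1, hr2⟩ := link_q hC h2
  have hinvq := (link_facts h1).2.2.2
  have hinvr := (link_facts h2).2.2.2
  -- χ r (g q) = χ q (g q) = u⁻¹ ; χ q (g r) = χ r (g r) = u⁻¹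
  have e1 : χ r (g q) = u⁻¹ := by rw [hinvr (g q), ← hinvq (g q), hq2]
  have e2 : χ q (g r) = u⁻¹ := by rw [hinvq (g r), ← hinvr (g r), hr2]
  have hCqr := hC q r
  have hCrq := hC r q
  rw [e1, e2, hq2] at hCqr
  rw [e1, e2, hr2] at hCrq
  -- hCqr : u⁻¹ * u⁻¹ = (u⁻¹) ^ a q r ; similarly for r q
  have f1 : u ^ (2 - a q r) = 1 := by
    have h5 : (u ^ (a q r))⁻¹ = u⁻¹ * u⁻¹ := by rw [← inv_zpow]; exact hCqr.symm
    calc u ^ ((2:ℤ) - a q r) = u ^ (2:ℤ) * (u ^ (a q r))⁻¹ := by rw [zpow_sub]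
    _ = u ^ (2:ℤ) * (u⁻¹ * u⁻¹) := by rw [h5]
    _ = 1 := by group
  have f2 : u ^ (2 - a r q) = 1 := by
    have h5 : (u ^ (a r q))⁻¹ = u⁻¹ * u⁻¹ := by rw [← inv_zpow]; exact hCrq.symm
    calc u ^ ((2:ℤ) - a r q) = u ^ (2:ℤ) * (u ^ (a r q))⁻¹ := by rw [zpow_sub]
    _ = u ^ (2:ℤ) * (u⁻¹ * u⁻¹) := by rw [h5]
    _ = 1 := by group
  have f3 : u ^ (a r q - a q r) = 1 := by
    have hex : a r q - a q r = (2 - a q r) - (2 - a r q) := by ring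
    rw [hex, zpow_sub, f1, f2, inv_one, mul_one]
  obtain ⟨hb1, hb2⟩ := offdiag_bounds hF hqr
  obtain ⟨hb3, hb4⟩ := offdiag_bounds hF (Ne.symm hqr)
  have heq : a r q - a q r = 0 := small_exp_aux u (hord p) f3 (by omega)
  have hprod := offdiag_prod_le_three hF hqr
  have hsmall : -1 ≤ a q r := by nlinarith
  have : (2 : ℤ) - a q r = 0 := small_exp_aux u (hord p) f1 (by omega)
  omega

end Aux

theorem statement2 {k : Type*} [Field k] [IsAlgClosed k] [CharZero k]
    {Γ : Type*} [CommGroup Γ] {θ : ℕ}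
    (g : Fin θ → Γ) (χ : Fin θ → Γ →* kˣ) (a : Fin θ → Fin θ → ℤ)
    (hD : IsCartanDatum g χ a)
    (hord : ∀ t : Fin θ, orderOf (χ t (g t)) = 0 ∨ 3 < orderOf (χ t (g t)))
    (i k' j l : Fin θ)
    (hik : Linkable g χ a i k') (hjl : Linkable g χ a j l) :
    a i j = a k' l := by
  obtain ⟨hF, hC, hne1⟩ := hD
  obtain ⟨hdiag, hle, hiff, hrest⟩ := hF
  have hF' : IsFiniteCartanMatrix a := ⟨hdiag, hle, hiff, hrest⟩
  by_cases hij : i = j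
  · subst hij
    have hkl : k' = l := link_unique ⟨hF', hC, hne1⟩ hord hik hjl
    subst hkl
    rw [hdiag, hdiag]
  by_cases hkl : k' = l
  · subst hkl
    exact absurd (link_unique ⟨hF', hC, hne1⟩ hord (linkable_symm hik) (linkable_symm hjl)) hij
  obtain ⟨hik_ne, haik, haki, hχk⟩ := link_facts hik
  obtain ⟨hjl_ne, hajl, halj, hχl⟩ := link_facts hjl
  by_cases hz : a i j = 0 ∧ a k' l = 0
  · rw [hz.1, hz.2]
  by_cases hil : i = l
  · subst hil
    rw [halj, haki]
  by_cases hkj : k' = j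
  · subst hkj
    rw [haik, hajl]
  -- reachability helper
  have hadj : ∀ x y : Fin θ, x ≠ y → a x y ≠ 0 → (dynkinGraph a).Reachable x y := by
    intro x y hne h0
    exact SimpleGraph.Adj.reachable (by rw [dynkinGraph, SimpleGraph.fromRel_adj]; exact ⟨hne, Or.inl h0⟩)
  have hor : a i j ≠ 0 ∨ a k' l ≠ 0 := by tauto
  have hail : a i l = 0 := by
    by_contra h0
    have Ril := hadj i l hil h0
    rcases hor with h | h
    · exact hjl.1 ((hadj i j hij h).symm.trans Ril)
    · exact hik.1 (Ril.trans (hadj k' l hkl h).symm)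
  have hakj : a k' j = 0 := by
    by_contra h0
    have Rkj := hadj k' j hkj h0
    rcases hor with h | h
    · exact hik.1 ((hadj i j hij h).trans Rkj.symm)
    · exact hjl.1 (Rkj.symm.trans (hadj k' l hkl h))
  -- main computation
  obtain ⟨_, hqkk⟩ := link_q hC hik
  -- hqkk : χ k' (g k') = (χ i (g i))⁻¹
  have hCij := hC i j
  have hCkl := hC k' l
  have hCil := hC i l
  have hCkj := hC k' j
  rw [hail, zpow_zero] at hCil
  rw [hakj, zpow_zero] at hCkj
  -- hCil : χ l (g i) * χ i (g l) = 1, with χ l (g i) = (χ j (g i))⁻¹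
  rw [hχl (g i)] at hCil
  have e1 : χ i (g l) = χ j (g i) := by
    have := eq_inv_of_mul_eq_one_right hCil
    rwa [inv_inv] at this
  -- hCkj : χ j (g k') * χ k' (g j) = 1, with χ k' (g j) = (χ i (g j))⁻¹
  rw [hχk (g j)] at hCkj
  have e2 : χ j (g k') = χ i (g j) := by
    have h4 : (χ i (g j))⁻¹ = (χ j (g k'))⁻¹ := eq_inv_of_mul_eq_one_right hCkj
    exact (inv_injective h4).symm
  rw [hχl (g k'), hχk (g l), e1, e2, hqkk, inv_zpow] at hCkl
  -- hCkl : (χ i (g j))⁻¹ * (χ j (g i))⁻¹ = (χ i (g i) ^ a k' l)⁻¹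
  have e3 : χ i (g i) ^ (a i j) = χ i (g i) ^ (a k' l) := by
    have h4 : ((χ j (g i)) * (χ i (g j)))⁻¹ = (χ i (g i) ^ (a k' l))⁻¹ := by
      rw [mul_inv_rev]; exact hCkl
    have h5 := inv_injective h4
    rw [hCij] at h5
    exact h5
  have e4 : χ i (g i) ^ (a i j - a k' l) = 1 := by
    rw [zpow_sub, e3]
    group
  obtain ⟨hb1, hb2⟩ := offdiag_bounds hF' hij
  obtain ⟨hb3, hb4⟩ := offdiag_bounds hF' hkl
  have := small_exp_aux (χ i (g i)) (hord i) e4 (by omega)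
  omega
end

section
/- Let D = D(Γ, (g_i), (χ_i), (a_{ij})) be a datum of finite Cartan type such that for every 1 ≤ t ≤ θ the multiplicative order of q_{tt} is greater than 3 (possibly infinite). Then a vertex cannot be linkable to two different vertices: if i and j are linkable and i and l are linkable, then j = l. -/
open scoped BigOperators

lemma quad_bound {θ : ℕ} {M : Matrix (Fin θ) (Fin θ) ℝ} (hM : M.PosDef) {j l : Fin θ}
    (h : j ≠ l) (c₁ c₂ : ℝ) (hc₂ : c₂ ≠ 0) :
    0 < c₁*c₁*M j j + c₁*c₂*M j l + c₂*c₁*M l j + c₂*c₂*M l l := by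
  set x : Fin θ → ℝ := c₁ • (Pi.single j 1 : Fin θ → ℝ) + c₂ • (Pi.single l 1 : Fin θ → ℝ) with hx
  have hxne : x ≠ 0 := by
    intro h0
    have := congrFun h0 l
    simp [hx, Pi.single_apply, h.symm, hc₂] at this
  have hpos := hM.dotProduct_mulVec_pos hxne
  simp only [hx, star_trivial, Matrix.mulVec_add, Matrix.mulVec_smul,
    Matrix.mulVec_single, dotProduct_add, add_dotProduct,
    smul_dotProduct, dotProduct_smul, single_dotProduct,
    smul_eq_mul, mul_one, Pi.add_apply, Pi.smul_apply] at hpos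
  simp only [Matrix.col_apply, op_smul_eq_mul, one_mul, mul_one] at hpos
  linarith [hpos]

open scoped BigOperators

theorem statement3 {k : Type*} [Field k] [IsAlgClosed k] [CharZero k]
    {Γ : Type*} [CommGroup Γ] {θ : ℕ}
    (g : Fin θ → Γ) (χ : Fin θ → Γ →* kˣ) (a : Fin θ → Fin θ → ℤ)
    (hD : IsCartanDatum g χ a)
    (hord : ∀ t : Fin θ, orderOf (χ t (g t)) = 0 ∨ 3 < orderOf (χ t (g t)))
    (i j l : Fin θ)
    (hij : Linkable g χ a i j) (hil : Linkable g χ a i l) :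
    j = l := by
  by_contra hne
  obtain ⟨hCM, hrel, hq1⟩ := hD
  obtain ⟨hdiag, hoff, hiff, d, hdpos, hsym, hpd⟩ := hCM
  obtain ⟨hrij, -, hχij⟩ := hij
  obtain ⟨hril, -, hχil⟩ := hil
  have hinej : i ≠ j := by rintro rfl; exact hrij (SimpleGraph.Reachable.refl i)
  have hinel : i ≠ l := by rintro rfl; exact hril (SimpleGraph.Reachable.refl i)
  have haij : a i j = 0 := by
    by_contra h
    exact hrij ((SimpleGraph.fromRel_adj _ i j).mpr ⟨hinej, Or.inl h⟩).reachable
  have hail : a i l = 0 := by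
    by_contra h
    exact hril ((SimpleGraph.fromRel_adj _ i l).mpr ⟨hinel, Or.inl h⟩).reachable
  have evij : ∀ x, χ i x * χ j x = 1 := fun x => by
    have := congrArg (fun f : Γ →* kˣ => f x) hχij
    simpa using this
  have evil : ∀ x, χ i x * χ l x = 1 := fun x => by
    have := congrArg (fun f : Γ →* kˣ => f x) hχil
    simpa using this
  have hχjl : χ j = χ l := by
    have h1 : χ j = (χ i)⁻¹ := eq_inv_of_mul_eq_one_right (α := Γ →* kˣ) hχij
    have h2 : χ l = (χ i)⁻¹ := eq_inv_of_mul_eq_one_right (α := Γ →* kˣ) hχil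
    rw [h1, h2]
  -- χ t (g t) = (χ i (g i))⁻¹ for t = j, l
  have key : ∀ t : Fin θ, a i t = 0 → (∀ x, χ i x * χ t x = 1) →
      χ t (g t) = (χ i (g i))⁻¹ := by
    intro t hat hev
    have e3 := hrel i t
    rw [hat, zpow_zero] at e3
    have e1 := hev (g i)
    have e2 := hev (g t)
    have f1 : χ t (g i) = (χ i (g i))⁻¹ := eq_inv_of_mul_eq_one_right e1
    have f2 : χ i (g t) = χ i (g i) := by
      have := eq_inv_of_mul_eq_one_right e3
      rw [this, f1, inv_inv]
    have : χ t (g t) = (χ i (g t))⁻¹ := eq_inv_of_mul_eq_one_right e2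
    rw [this, f2]
  have hqj := key j haij evij
  have hql := key l hail evil
  set q : kˣ := χ j (g j) with hqdef
  have hqll : χ l (g l) = q := by rw [hql, hqj]
  have hqne : q ≠ 1 := hq1 j
  -- the two power relations
  have hz1 : q * q = q ^ (a j l) := by
    have := hrel j l
    rw [← hχjl] at this
    rw [← this]
    congr 1
    rw [hχjl, hqll]
  have hz2 : q * q = q ^ (a l j) := by
    have := hrel l j
    rw [hχjl, hqll] at this
    rw [← this, mul_comm]
    congr 1
    rw [← hχjl]
  have hp0 : a j l ≤ 0 := hoff j l hne
  have hr0 : a l j ≤ 0 := hoff l j (Ne.symm hne)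
  -- positive definiteness bound : a j l * a l j < 4
  have hbound : a j l * a l j < 4 := by
    have hq := quad_bound hpd hne (-(a j l : ℝ)) 2 (by norm_num)
    simp only [Matrix.of_apply] at hq
    have hdj := hdpos j
    have hdl := hdpos l
    have hsjl := hsym j l
    have hdjR : (0:ℝ) < (d j : ℝ) := by exact_mod_cast hdj
    have hdlR : (0:ℝ) < (d l : ℝ) := by exact_mod_cast hdl
    have hsR : ((d j : ℝ)) * (a j l : ℝ) = (d l : ℝ) * (a l j : ℝ) := by exact_mod_cast hsjl
    have hjj : a j j = 2 := hdiag j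
    have hll : a l l = 2 := hdiag l
    have : ((a j l : ℝ)) * (a l j : ℝ) < 4 := by
      push_cast [hjj, hll] at hq
      nlinarith [hq, hdjR, hdlR, hsR]
    exact_mod_cast this
  -- turn zpow relations into orderOf divisibility
  have hdvd : ∀ s : ℤ, s ≤ 0 → q * q = q ^ s → orderOf q ∣ (2 - s).toNat := by
    intro s hs hqs
    apply orderOf_dvd_of_pow_eq_one
    have h2 : q ^ (2:ℤ) = q * q := by
      rw [show (2:ℤ) = ((2:ℕ):ℤ) by norm_num, zpow_natCast, pow_two]
    have : q ^ ((2 : ℤ) - s) = 1 := by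
      rw [zpow_sub, h2, hqs]
      simp
    rw [← zpow_natCast, Int.toNat_of_nonneg (by omega)]
    exact this
  have hm1 := hdvd _ hp0 hz1
  have hm2 := hdvd _ hr0 hz2
  -- one of the exponents 2 - a j l, 2 - a l j is 2 or 3
  have hfinal : orderOf q ∣ 2 ∨ orderOf q ∣ 3 := by
    by_cases hp : a j l = 0
    · left
      rw [hp] at hm1
      simpa using hm1
    · by_cases hp' : a j l = -1
      · right
        rw [hp'] at hm1
        simpa using hm1
      · -- a j l ≤ -2, hence a l j = -1
        have hr : a l j = -1 := by
          have hrne : a l j ≠ 0 := fun h => hp ((hiff j l).mpr h)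
          have hb1 : (2:ℤ) ≤ -(a j l) := by omega
          by_contra hcon
          have hb2 : (2:ℤ) ≤ -(a l j) := by omega
          have hm : (2:ℤ)*2 ≤ (-(a j l)) * (-(a l j)) :=
            mul_le_mul hb1 hb2 (by norm_num) (by omega)
          nlinarith [hm, hbound]
        right
        rw [hr] at hm2
        simpa using hm2
  have hqord : orderOf q = 0 ∨ 3 < orderOf q := hord j
  rcases hfinal with h | h
  · have h1 := Nat.le_of_dvd (by norm_num) h
    have h2 := Nat.pos_of_dvd_of_pos h (by norm_num)
    omega
  · have h1 := Nat.le_of_dvd (by norm_num) h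
    have h2 := Nat.pos_of_dvd_of_pos h (by norm_num)
    omega
end

section
/- Let D = D(Γ, (g_i), (χ_i), (a_{ij})) be a datum of finite Cartan type and λ a family of linking parameters for D. Assume the Cartan matrix is simply laced, i.e. a_{ij} ∈ {0, −1} for all i ≠ j, and that for every 1 ≤ i ≤ θ the multiplicative order of q_{ii} is finite and odd. Then the linking graph of (D, λ) is bipartite. -/
open scoped BigOperators

/-- `lam` is a family of linking parameters for the datum: for `i ≁ j` one has
`lam j i = -q j i * lam i j`, and `lam i j = 0` whenever `g i * g j = 1` or `χ i * χ j ≠ ε`. -/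
def IsLinkingFamily {k : Type*} [Field k] {Γ : Type*} [CommGroup Γ] {θ : ℕ}
    (g : Fin θ → Γ) (χ : Fin θ → Γ →* kˣ) (a : Fin θ → Fin θ → ℤ)
    (lam : Fin θ → Fin θ → k) : Prop :=
  (∀ i j, ¬ (dynkinGraph a).Reachable i j → lam j i = -(χ i (g j) : k) * lam i j) ∧
  (∀ i j, ¬ (dynkinGraph a).Reachable i j → (g i * g j = 1 ∨ χ i * χ j ≠ 1) → lam i j = 0)

/-- Vertices `i, j` are linked: they are linkable and `lam i j ≠ 0`. -/
def Linked {k : Type*} [Field k] {Γ : Type*} [CommGroup Γ] {θ : ℕ}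
    (g : Fin θ → Γ) (χ : Fin θ → Γ →* kˣ) (a : Fin θ → Fin θ → ℤ)
    (lam : Fin θ → Fin θ → k) (i j : Fin θ) : Prop :=
  Linkable g χ a i j ∧ lam i j ≠ 0

/-- The linking graph of `(D, lam)` (whose vertices are the connected components of the Dynkin
graph, with an edge between two components iff they contain linked vertices) is bipartite,
i.e. the components can be `2`-colored so that no two linked vertices lie in equally colored
components. -/
def LinkingGraphBipartite {k : Type*} [Field k] {Γ : Type*} [CommGroup Γ] {θ : ℕ}
    (g : Fin θ → Γ) (χ : Fin θ → Γ →* kˣ) (a : Fin θ → Fin θ → ℤ)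
    (lam : Fin θ → Fin θ → k) : Prop :=
  ∃ C : (dynkinGraph a).ConnectedComponent → Bool,
    ∀ i j, Linked g χ a lam i j →
      C ((dynkinGraph a).connectedComponentMk i) ≠ C ((dynkinGraph a).connectedComponentMk j)

/-!
In a simply laced datum, `q i j * q j i = q i i ^ (-1)` along a Dynkin edge is symmetric in `i, j`,
so `q i i` is constant on each connected component of the Dynkin graph. If `i, j` are linkable then
`a i j = 0` and `χ j = χ i⁻¹`, which force `q j j = (q i i)⁻¹`; as `q i i ≠ 1` has odd order,
`q i i ≠ (q i i)⁻¹`. Coloring a component by which of `q`, `q⁻¹` comes first in a fixed linear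
order on `kˣ` therefore gives linked components different colors.
-/

open SimpleGraph

theorem Function.Involutive.exists_bool_ne {α : Type*} {f : α → α} (hf : Function.Involutive f) :
    ∃ s : α → Bool, ∀ x, f x ≠ x → s (f x) ≠ s x := by
  let : LinearOrder α := IsWellOrder.linearOrder WellOrderingRel
  refine ⟨fun x => decide (x < f x), fun x hx => ?_⟩
  simp only [hf x]
  rcases lt_or_gt_of_ne hx with h | h <;> simp [h, h.not_gt]

theorem SimpleGraph.Reachable.eq_of_forall_adj {V α : Type*} {G : SimpleGraph V} {f : V → α}
    (hf : ∀ v w, G.Adj v w → f v = f w) {v w : V} (h : G.Reachable v w) : f v = f w := by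
  obtain ⟨p⟩ := h
  induction p with
  | nil => rfl
  | cons hadj _ ih => exact (hf _ _ hadj).trans ih

theorem inv_ne_self_of_odd_orderOf {G : Type*} [Group G] {x : G} (hx : x ≠ 1)
    (hodd : Odd (orderOf x)) : x⁻¹ ≠ x := by
  intro h
  have hsq : x ^ 2 = 1 := by rw [sq, ← inv_eq_iff_mul_eq_one.mp h]
  exact hx <| orderOf_eq_one_iff.mp <|
    (Nat.coprime_two_right.mpr hodd).eq_one_of_dvd (orderOf_dvd_of_pow_eq_one hsq)

theorem IsFiniteCartanMatrix.dynkinGraph_adj {θ : ℕ} {a : Fin θ → Fin θ → ℤ}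
    (ha : IsFiniteCartanMatrix a) {i j : Fin θ} : (dynkinGraph a).Adj i j ↔ i ≠ j ∧ a i j ≠ 0 := by
  rw [dynkinGraph, fromRel_adj]
  exact and_congr_right fun _ => or_iff_left_of_imp fun h h0 => h ((ha.2.2.1 i j).mp h0)

namespace IsCartanDatum

variable {k : Type*} [Field k] {Γ : Type*} [CommGroup Γ] {θ : ℕ}
  {g : Fin θ → Γ} {χ : Fin θ → Γ →* kˣ} {a : Fin θ → Fin θ → ℤ}

theorem diag_eq_of_adj (hD : IsCartanDatum g χ a)
    (hsl : ∀ i j, i ≠ j → a i j = 0 ∨ a i j = -1) {v w : Fin θ} (hvw : (dynkinGraph a).Adj v w) :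
    χ v (g v) = χ w (g w) := by
  have hwv := hvw.symm
  rw [hD.1.dynkinGraph_adj] at hvw hwv
  have hv := hD.2.1 v w
  have hw := hD.2.1 w v
  rw [(hsl v w hvw.1).resolve_left hvw.2, zpow_neg_one] at hv
  rw [(hsl w v hwv.1).resolve_left hwv.2, zpow_neg_one, mul_comm, hv] at hw
  exact inv_injective hw

theorem diag_eq_inv_of_linkable (hD : IsCartanDatum g χ a) {i j : Fin θ}
    (hij : Linkable g χ a i j) : χ j (g j) = (χ i (g i))⁻¹ := by
  obtain ⟨hnr, -, hχ⟩ := hij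
  have ha : a i j = 0 := by
    by_contra h
    exact hnr (hD.1.dynkinGraph_adj.mpr ⟨by rintro rfl; exact hnr (.refl i), h⟩).reachable
  have hq := hD.2.1 i j
  rw [ha, zpow_zero] at hq
  have hχi := DFunLike.congr_fun hχ (g i)
  have hχj := DFunLike.congr_fun hχ (g j)
  simp only [MonoidHom.mul_apply, MonoidHom.one_apply] at hχi hχj
  rw [eq_inv_of_mul_eq_one_right hχi, eq_inv_of_mul_eq_one_left hχj, ← mul_inv, inv_eq_one] at hq
  exact eq_inv_of_mul_eq_one_right hq

end IsCartanDatum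

theorem statement4_general {k : Type*} [Field k]
    {Γ : Type*} [CommGroup Γ] {θ : ℕ}
    (g : Fin θ → Γ) (χ : Fin θ → Γ →* kˣ) (a : Fin θ → Fin θ → ℤ)
    (lam : Fin θ → Fin θ → k)
    (hD : IsCartanDatum g χ a)
    (hsl : ∀ i j, i ≠ j → a i j = 0 ∨ a i j = -1)
    (hord : ∀ i, 0 < orderOf (χ i (g i)) ∧ Odd (orderOf (χ i (g i)))) :
    LinkingGraphBipartite g χ a lam := by
  obtain ⟨s, hs⟩ := inv_involutive.exists_bool_ne (α := kˣ)
  have hq : ∀ v w, (dynkinGraph a).Reachable v w → χ v (g v) = χ w (g w) :=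
    fun _ _ => Reachable.eq_of_forall_adj fun _ _ => hD.diag_eq_of_adj hsl
  refine ⟨ConnectedComponent.lift (fun i => s (χ i (g i)))
    fun v w p _ => congrArg s (hq v w ⟨p⟩), fun i j hij => ?_⟩
  simp only [ConnectedComponent.lift_mk, hD.diag_eq_inv_of_linkable hij.1]
  exact (hs _ (inv_ne_self_of_odd_orderOf (hD.2.2 i) (hord i).2)).symm

theorem statement4 {k : Type*} [Field k] [IsAlgClosed k] [CharZero k]
    {Γ : Type*} [CommGroup Γ] {θ : ℕ}
    (g : Fin θ → Γ) (χ : Fin θ → Γ →* kˣ) (a : Fin θ → Fin θ → ℤ)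
    (lam : Fin θ → Fin θ → k)
    (hD : IsCartanDatum g χ a) (hlam : IsLinkingFamily g χ a lam)
    (hsl : ∀ i j, i ≠ j → a i j = 0 ∨ a i j = -1)
    (hord : ∀ i, 0 < orderOf (χ i (g i)) ∧ Odd (orderOf (χ i (g i)))) :
    LinkingGraphBipartite g χ a lam :=
  statement4_general g χ a lam hD hsl hord
end

section
/- Let D = D(Γ, (g_i), (χ_i), (a_{ij})) be a datum of finite Cartan type and λ a family of linking parameters for D. Assume that for every 1 ≤ i ≤ θ the element q_{ii} is not a root of unity. Then the linking graph of (D, λ) is bipartite. -/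
open scoped BigOperators

section Aux
variable {G : Type*} [CommGroup G]

/-- `x ^ m = y ^ n` for some positive `m, n`. -/
def PowRel (x y : G) : Prop := ∃ m n : ℕ, 0 < m ∧ 0 < n ∧ x ^ m = y ^ n

theorem powRel_refl (x : G) : PowRel x x := ⟨1, 1, one_pos, one_pos, rfl⟩

theorem powRel_symm {x y : G} (h : PowRel x y) : PowRel y x := by
  obtain ⟨m, n, hm, hn, h⟩ := h; exact ⟨n, m, hn, hm, h.symm⟩

theorem powRel_trans {x y z : G} (h1 : PowRel x y) (h2 : PowRel y z) : PowRel x z := by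
  obtain ⟨m, n, hm, hn, e1⟩ := h1
  obtain ⟨m', n', hm', hn', e2⟩ := h2
  refine ⟨m * m', n * n', Nat.mul_pos hm hm', Nat.mul_pos hn hn', ?_⟩
  rw [pow_mul, e1, ← pow_mul, mul_comm n m', pow_mul, e2, ← pow_mul, mul_comm]

theorem powRel_inv {x y : G} (h : PowRel x y) : PowRel x⁻¹ y⁻¹ := by
  obtain ⟨m, n, hm, hn, e⟩ := h
  exact ⟨m, n, hm, hn, by rw [inv_pow, inv_pow, e]⟩

theorem not_powRel_inv {x y : G} (hx : ¬ IsOfFinOrder x) (h : PowRel x y) :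
    ¬ PowRel x y⁻¹ := by
  rintro ⟨m', n', hm', hn', e'⟩
  obtain ⟨m, n, hm, hn, e⟩ := h
  apply hx
  rw [isOfFinOrder_iff_pow_eq_one]
  refine ⟨m * n' + m' * n, by positivity, ?_⟩
  rw [pow_add, pow_mul, e, pow_mul, e', ← pow_mul, ← pow_mul, mul_comm n n', inv_pow,
    mul_inv_cancel]

def powSetoid (G : Type*) [CommGroup G] : Setoid G :=
  ⟨PowRel, ⟨powRel_refl, powRel_symm, powRel_trans⟩⟩

end Aux

/-- Any involution admits a 2-coloring separating non-fixed points from their images. -/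
theorem exists_bool_coloring {W : Type*} (f : W → W) (hf : Function.Involutive f) :
    ∃ C : W → Bool, ∀ w, w ≠ f w → C w ≠ C (f w) := by
  classical
  let r : W → W → Prop := fun w w' => w' = w ∨ w' = f w
  have hequiv : Equivalence r := by
    constructor
    · intro w; exact Or.inl rfl
    · rintro w w' (rfl | rfl)
      · exact Or.inl rfl
      · exact Or.inr (hf w).symm
    · rintro w w' w'' (rfl | rfl) (rfl | rfl)
      · exact Or.inl rfl
      · exact Or.inr rfl
      · exact Or.inr rfl
      · exact Or.inl (hf w)
  let s : Setoid W := ⟨r, hequiv⟩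
  refine ⟨fun w => (Quotient.mk s w).out = w, ?_⟩
  intro w hw
  have hrel : r w (Quotient.mk s w).out := by
    have := Quotient.exact (Quotient.out_eq (Quotient.mk s w)).symm
    exact this
  have hmk : (Quotient.mk s (f w)) = Quotient.mk s w := Quotient.sound (Or.inr (hf w).symm)
  rcases hrel with h | h
  · have h1 : (Quotient.mk s w).out = w := h
    have h2 : (Quotient.mk s (f w)).out ≠ f w := by rw [hmk, h1]; exact hw
    simp [h1, h2]
  · have h1 : (Quotient.mk s w).out ≠ w := by rw [h]; exact fun e => hw e.symm
    have h2 : (Quotient.mk s (f w)).out = f w := by rw [hmk, h]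
    simp [h1, h2]

theorem statement5 {k : Type*} [Field k] [IsAlgClosed k] [CharZero k]
    {Γ : Type*} [CommGroup Γ] {θ : ℕ}
    (g : Fin θ → Γ) (χ : Fin θ → Γ →* kˣ) (a : Fin θ → Fin θ → ℤ)
    (lam : Fin θ → Fin θ → k)
    (hD : IsCartanDatum g χ a) (hlam : IsLinkingFamily g χ a lam)
    (hgen : ∀ i, ¬ IsOfFinOrder (χ i (g i))) :
    LinkingGraphBipartite g χ a lam := by
  classical
  obtain ⟨⟨hdiag, hoff, hsymm0, _⟩, hq, hq1⟩ := hD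
  set Q : Fin θ → kˣ := fun i => χ i (g i) with hQ
  -- q-relation across an edge of the Dynkin graph
  have hQQ : ∀ i j, Q i ^ (a i j) = Q j ^ (a j i) := by
    intro i j
    rw [← hq i j, ← hq j i, mul_comm]
  have hadj : ∀ i j, (dynkinGraph a).Adj i j → PowRel (Q i) (Q j) := by
    intro i j hij
    obtain ⟨hne, h⟩ := hij
    have hne' : a i j ≠ 0 := by
      rcases h with h | h
      · exact h
      · exact fun e => h ((hsymm0 i j).mp e)
    have hne'' : a j i ≠ 0 := fun e => hne' ((hsymm0 j i).mp e)
    have h1 : a i j < 0 := lt_of_le_of_ne (hoff i j hne) hne'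
    have h2 : a j i < 0 := lt_of_le_of_ne (hoff j i (Ne.symm hne)) hne''
    refine ⟨(-(a i j)).toNat, (-(a j i)).toNat, ?_, ?_, ?_⟩
    · simp; omega
    · simp; omega
    · have e1 : ((-(a i j)).toNat : ℤ) = -(a i j) := Int.toNat_of_nonneg (by omega)
      have e2 : ((-(a j i)).toNat : ℤ) = -(a j i) := Int.toNat_of_nonneg (by omega)
      have := hQQ i j
      calc Q i ^ (-(a i j)).toNat = Q i ^ (((-(a i j)).toNat : ℤ)) := (zpow_natCast _ _).symm
        _ = (Q i ^ (a i j))⁻¹ := by rw [e1, zpow_neg]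
        _ = (Q j ^ (a j i))⁻¹ := by rw [this]
        _ = Q j ^ (((-(a j i)).toNat : ℤ)) := by rw [e2, zpow_neg]
        _ = Q j ^ (-(a j i)).toNat := zpow_natCast _ _
  have hreach : ∀ {i j}, (dynkinGraph a).Reachable i j → PowRel (Q i) (Q j) := by
    intro i j hr
    obtain ⟨p⟩ := hr
    induction p with
    | nil => exact powRel_refl _
    | cons h p ih => exact powRel_trans (hadj _ _ h) ih
  -- the quotient of kˣ by PowRel and its inversion involution
  let s := powSetoid kˣ
  let W := Quotient s
  let invQ : W → W := Quotient.map (·⁻¹) (fun x y h => powRel_inv h)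
  have hinv : Function.Involutive invQ := by
    intro w
    induction w using Quotient.ind with
    | _ x => show Quotient.mk s (x⁻¹⁻¹) = Quotient.mk s x; rw [inv_inv]
  obtain ⟨C0, hC0⟩ := exists_bool_coloring invQ hinv
  -- the map from connected components to W
  let φ : Fin θ → W := fun i => Quotient.mk s (Q i)
  have hφ : ∀ (v w : Fin θ), (dynkinGraph a).Reachable v w → φ v = φ w :=
    fun v w h => Quotient.sound (hreach h)
  let L : (dynkinGraph a).ConnectedComponent → W :=
    SimpleGraph.ConnectedComponent.lift φ (fun v w p _ => hφ v w ⟨p⟩)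
  refine ⟨fun c => C0 (L c), ?_⟩
  rintro i j ⟨⟨hnr, -, hχ⟩, -⟩
  have hij : i ≠ j := by rintro rfl; exact hnr (SimpleGraph.Reachable.refl i)
  have haij : a i j = 0 := by
    by_contra h
    exact hnr (SimpleGraph.Adj.reachable ⟨hij, Or.inl h⟩)
  -- compute Q j = (Q i)⁻¹
  have e1 : χ i (g i) * χ j (g i) = 1 := by
    have := congrArg (fun f : Γ →* kˣ => f (g i)) hχ
    simpa using this
  have e2 : χ i (g j) * χ j (g j) = 1 := by
    have := congrArg (fun f : Γ →* kˣ => f (g j)) hχ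
    simpa using this
  have e3 : χ j (g i) * χ i (g j) = 1 := by
    have := hq i j
    rw [haij] at this
    simpa using this
  have hQj : Q j = (Q i)⁻¹ := by
    have h4 : χ j (g i) = (Q i)⁻¹ := eq_inv_of_mul_eq_one_right e1
    have h5 : χ i (g j) = Q i := by
      have := e3
      rw [h4] at this
      exact (inv_mul_eq_one.mp this).symm
    have h6 : Q j = (χ i (g j))⁻¹ := eq_inv_of_mul_eq_one_right e2
    rw [h6, h5]
  have hLi : L ((dynkinGraph a).connectedComponentMk i) = Quotient.mk s (Q i) := rfl
  have hLj : L ((dynkinGraph a).connectedComponentMk j) = Quotient.mk s (Q j) := rfl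
  show C0 (L ((dynkinGraph a).connectedComponentMk i)) ≠
    C0 (L ((dynkinGraph a).connectedComponentMk j))
  rw [hLi, hLj, hQj]
  have : (Quotient.mk s ((Q i)⁻¹) : W) = invQ (Quotient.mk s (Q i)) := rfl
  rw [this]
  apply hC0
  intro he
  exact not_powRel_inv (hgen i) (powRel_refl (Q i)) (Quotient.exact he)
end

section
/- Let D = D(Γ, (g_i), (χ_i), (a_{ij})) be a datum of finite Cartan type with θ vertices and λ a family of linking parameters for D. Suppose n ≥ 1 and t : {1,…,2n} → {1,…,θ} is an injective map such that the pairs (t(r), t(n+r)) and (t(n+r), t(r)) for 1 ≤ r ≤ n are exactly the ordered pairs of linked vertices of (D, λ). For 1 ≤ i,j ≤ 2n set g'_i = g_{t(i)}, χ'_i = χ_{t(i)}, a'_{ij} = a_{t(i) t(j)}, and, for i,j with i ≁ j with respect to the matrix (a'_{ij}), set λ'_{ij} = λ_{t(i) t(j)} if t(i) ≁ t(j) in the Dynkin graph of D and λ'_{ij} = 0 otherwise. Then: (a) D' = D(Γ, (g'_i), (χ'_i), (a'_{ij})) is a datum of finite Cartan type and λ' is a family of linking parameters for D'; and (b) there exists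 a surjective k-algebra homomorphism π : U(D, λ) → U(D', λ') satisfying π(x_{t(i)}) = x_i for all 1 ≤ i ≤ 2n, π(x_κ) = 0 for all κ ∈ {1,…,θ} not in the image of t, and π(T_g) = T_g for all g ∈ Γ. -/
open scoped BigOperators

noncomputable section

variable (k : Type*) [Field k] (Γ : Type*) [CommGroup Γ]

/-- The generator `x i` of the free algebra on `x_1, …, x_θ` and `T_g` (`g ∈ Γ`). -/
def Xgen {θ : ℕ} (i : Fin θ) : FreeAlgebra k (Fin θ ⊕ Γ) :=
  FreeAlgebra.ι k (Sum.inl i)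

/-- The generator `T g` of the free algebra on `x_1, …, x_θ` and `T_g` (`g ∈ Γ`). -/
def Tgen (θ : ℕ) (gg : Γ) : FreeAlgebra k (Fin θ ⊕ Γ) :=
  FreeAlgebra.ι k (Sum.inr gg)

/-- The braided adjoint action `ad_c(x_i) : z ↦ x_i z − T_{g_i} z T_{g_i⁻¹} x_i` on the free
algebra. -/
def adc {θ : ℕ} (g : Fin θ → Γ) (i : Fin θ) (z : FreeAlgebra k (Fin θ ⊕ Γ)) :
    FreeAlgebra k (Fin θ ⊕ Γ) :=
  Xgen k Γ i * z - Tgen k Γ θ (g i) * z * Tgen k Γ θ (g i)⁻¹ * Xgen k Γ i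

/-- The defining relations of `U(D, λ)`. -/
inductive URel {θ : ℕ} (g : Fin θ → Γ) (χ : Fin θ → Γ →* kˣ) (a : Fin θ → Fin θ → ℤ)
    (lam : Fin θ → Fin θ → k) :
    FreeAlgebra k (Fin θ ⊕ Γ) → FreeAlgebra k (Fin θ ⊕ Γ) → Prop
  | group_mul (g₁ g₂ : Γ) :
      URel g χ a lam (Tgen k Γ θ g₁ * Tgen k Γ θ g₂) (Tgen k Γ θ (g₁ * g₂))
  | group_one :
      URel g χ a lam (Tgen k Γ θ (1 : Γ)) 1
  | group_action (gg : Γ) (i : Fin θ) :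
      URel g χ a lam (Tgen k Γ θ gg * Xgen k Γ i) ((χ i gg : k) • (Xgen k Γ i * Tgen k Γ θ gg))
  | serre (i j : Fin θ) (hne : i ≠ j) (hsim : (dynkinGraph a).Reachable i j) :
      URel g χ a lam ((adc k Γ g i)^[(1 - a i j).toNat] (Xgen k Γ j)) 0
  | link (i j : Fin θ) (hnsim : ¬ (dynkinGraph a).Reachable i j) :
      URel g χ a lam
        (Xgen k Γ i * Xgen k Γ j - (χ j (g i) : k) • (Xgen k Γ j * Xgen k Γ i))
        (lam i j • ((1 : FreeAlgebra k (Fin θ ⊕ Γ)) - Tgen k Γ θ (g i * g j)))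

/-- The Hopf algebra `U(D, λ)` (as a `k`-algebra): the quotient of the free algebra on
`x_1, …, x_θ` and `T_g` (`g ∈ Γ`) by the group relations, the action relations, the quantum
Serre relations and the linking relations. -/
abbrev UAlg {θ : ℕ} (g : Fin θ → Γ) (χ : Fin θ → Γ →* kˣ) (a : Fin θ → Fin θ → ℤ)
    (lam : Fin θ → Fin θ → k) :=
  RingQuot (URel k Γ g χ a lam)

end

/-- The inclusion `{1,…,n} ↪ {1,…,2n}`. -/
def finL {n : ℕ} (r : Fin n) : Fin (2 * n) := ⟨r.1, by have := r.2; omega⟩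

/-- The inclusion `{1,…,n} ↪ {1,…,2n}` sending `i` to `n + i`. -/
def finR {n : ℕ} (r : Fin n) : Fin (2 * n) := ⟨n + r.1, by have := r.2; omega⟩


section AuxProof13

open scoped Classical

section PosDefAux
open Matrix

lemma aux_posDef_submatrix {m' l : Type*} [Fintype m'] [Fintype l] [DecidableEq l]
    {M : Matrix l l ℝ} (hM : M.PosDef) {t : m' → l} (ht : Function.Injective t) :
    (M.submatrix t t).PosDef := by
  refine Matrix.PosDef.of_dotProduct_mulVec_pos (hM.1.submatrix t) fun x hx => ?_
  set y : l → ℝ := fun κ => ∑ i, if t i = κ then x i else 0 with hy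
  have key : ∀ f : l → ℝ, (∑ κ, y κ * f κ) = ∑ i, x i * f (t i) := by
    intro f
    simp only [hy, Finset.sum_mul]
    rw [Finset.sum_comm]
    refine Finset.sum_congr rfl fun i _ => ?_
    simp only [ite_mul, zero_mul]
    rw [Finset.sum_ite_eq]
    simp
  have hyt : ∀ i, y (t i) = x i := by
    intro i
    simp only [hy, ht.eq_iff]
    rw [Finset.sum_ite_eq']
    simp
  have hyne : y ≠ 0 := by
    obtain ⟨i, hi⟩ := Function.ne_iff.mp hx
    intro h
    exact hi (by rw [← hyt i, h]; rfl)
  have h2 : ∀ i, (M *ᵥ y) (t i) = ((M.submatrix t t) *ᵥ x) i := by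
    intro i
    simp only [Matrix.mulVec, dotProduct, Matrix.submatrix_apply]
    rw [show (∑ κ, M (t i) κ * y κ) = ∑ κ, y κ * M (t i) κ from
      Finset.sum_congr rfl fun _ _ => mul_comm _ _, key]
    exact Finset.sum_congr rfl fun j _ => mul_comm _ _
  calc (0:ℝ) < dotProduct (star y) (M *ᵥ y) := hM.dotProduct_mulVec_pos hyne
    _ = ∑ κ, y κ * (M *ᵥ y) κ := by simp [dotProduct]
    _ = ∑ i, x i * (M *ᵥ y) (t i) := key _
    _ = ∑ i, x i * ((M.submatrix t t) *ᵥ x) i :=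
        Finset.sum_congr rfl fun i _ => by rw [h2]
    _ = dotProduct (star x) ((M.submatrix t t) *ᵥ x) := by simp [dotProduct]

end PosDefAux

variable {k : Type*} [Field k] {Γ : Type*} [CommGroup Γ] {θ m : ℕ}

lemma aux_reach_map {a : Fin θ → Fin θ → ℤ} {t : Fin m → Fin θ} (ht : Function.Injective t)
    {i j : Fin m} (h : (dynkinGraph fun x y => a (t x) (t y)).Reachable i j) :
    (dynkinGraph a).Reachable (t i) (t j) := by
  refine h.map ⟨t, ?_⟩
  intro p q hpq
  simp only [dynkinGraph, SimpleGraph.fromRel_adj] at hpq ⊢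
  exact ⟨fun e => hpq.1 (ht e), hpq.2⟩

lemma aux_adj_of_ne {a : Fin θ → Fin θ → ℤ} {i j : Fin θ} (hne : i ≠ j) (hij : a i j ≠ 0) :
    (dynkinGraph a).Adj i j := by
  simp only [dynkinGraph, SimpleGraph.fromRel_adj]
  exact ⟨hne, Or.inl hij⟩

variable (g : Fin θ → Γ) (χ : Fin θ → Γ →* kˣ) (a : Fin θ → Fin θ → ℤ) (lam : Fin θ → Fin θ → k)

lemma aux_mk_T_mul (g₁ g₂ : Γ) :
    RingQuot.mkAlgHom k (URel k Γ g χ a lam) (Tgen k Γ θ g₁) *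
      RingQuot.mkAlgHom k (URel k Γ g χ a lam) (Tgen k Γ θ g₂) =
      RingQuot.mkAlgHom k (URel k Γ g χ a lam) (Tgen k Γ θ (g₁ * g₂)) := by
  rw [← map_mul]
  exact RingQuot.mkAlgHom_rel k (URel.group_mul g₁ g₂)

lemma aux_mk_T_one :
    RingQuot.mkAlgHom k (URel k Γ g χ a lam) (Tgen k Γ θ (1 : Γ)) = 1 :=
  (RingQuot.mkAlgHom_rel k URel.group_one).trans (map_one _)

lemma aux_mk_T_inv (h : Γ) :
    RingQuot.mkAlgHom k (URel k Γ g χ a lam) (Tgen k Γ θ h) *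
      RingQuot.mkAlgHom k (URel k Γ g χ a lam) (Tgen k Γ θ h⁻¹) = 1 := by
  rw [aux_mk_T_mul, mul_inv_cancel, aux_mk_T_one]

lemma aux_mk_TX (hh : Γ) (i : Fin θ) :
    RingQuot.mkAlgHom k (URel k Γ g χ a lam) (Tgen k Γ θ hh) *
      RingQuot.mkAlgHom k (URel k Γ g χ a lam) (Xgen k Γ i) =
      (χ i hh : k) • (RingQuot.mkAlgHom k (URel k Γ g χ a lam) (Xgen k Γ i) *
        RingQuot.mkAlgHom k (URel k Γ g χ a lam) (Tgen k Γ θ hh)) := by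
  rw [← map_mul]
  rw [RingQuot.mkAlgHom_rel k (URel.group_action hh i), map_smul, map_mul]

lemma aux_mk_adc (i j : Fin θ) :
    RingQuot.mkAlgHom k (URel k Γ g χ a lam) (adc k Γ g i (Xgen k Γ j)) =
      RingQuot.mkAlgHom k (URel k Γ g χ a lam) (Xgen k Γ i) *
        RingQuot.mkAlgHom k (URel k Γ g χ a lam) (Xgen k Γ j) -
      (χ j (g i) : k) • (RingQuot.mkAlgHom k (URel k Γ g χ a lam) (Xgen k Γ j) *
        RingQuot.mkAlgHom k (URel k Γ g χ a lam) (Xgen k Γ i)) := by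
  set F := RingQuot.mkAlgHom k (URel k Γ g χ a lam) with hF
  show F (Xgen k Γ i * Xgen k Γ j -
      Tgen k Γ θ (g i) * Xgen k Γ j * Tgen k Γ θ (g i)⁻¹ * Xgen k Γ i) = _
  simp only [map_sub, map_mul]
  congr 1
  calc F (Tgen k Γ θ (g i)) * F (Xgen k Γ j) * F (Tgen k Γ θ (g i)⁻¹) * F (Xgen k Γ i)
      = ((χ j (g i) : k) • (F (Xgen k Γ j) * F (Tgen k Γ θ (g i)))) *
          F (Tgen k Γ θ (g i)⁻¹) * F (Xgen k Γ i) := by rw [aux_mk_TX]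
    _ = (χ j (g i) : k) • (F (Xgen k Γ j) *
          (F (Tgen k Γ θ (g i)) * F (Tgen k Γ θ (g i)⁻¹)) * F (Xgen k Γ i)) := by
        simp only [smul_mul_assoc, mul_assoc]
    _ = (χ j (g i) : k) • (F (Xgen k Γ j) * F (Xgen k Γ i)) := by
        rw [aux_mk_T_inv, mul_one]

lemma aux_mk_adc_zero (i j : Fin θ) (hnsim : ¬ (dynkinGraph a).Reachable i j)
    (h0 : lam i j = 0) :
    RingQuot.mkAlgHom k (URel k Γ g χ a lam) (adc k Γ g i (Xgen k Γ j)) = 0 := by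
  rw [aux_mk_adc]
  have hrel := RingQuot.mkAlgHom_rel k (URel.link (k := k) (Γ := Γ) (g := g) (χ := χ)
    (a := a) (lam := lam) i j hnsim)
  rw [map_sub, map_mul, map_smul, map_mul, h0, zero_smul, map_zero] at hrel
  exact hrel

/-- The algebra map from the free algebra on `Fin θ ⊕ Γ` to `U(D', λ')`. -/
noncomputable def phiAux (g' : Fin m → Γ) (χ' : Fin m → Γ →* kˣ) (a' : Fin m → Fin m → ℤ)
    (lam' : Fin m → Fin m → k) (t : Fin m → Fin θ) :
    FreeAlgebra k (Fin θ ⊕ Γ) →ₐ[k] UAlg k Γ g' χ' a' lam' :=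
  FreeAlgebra.lift k (Sum.elim
    (fun κ => if h : ∃ i, t i = κ then
        RingQuot.mkAlgHom k (URel k Γ g' χ' a' lam') (Xgen k Γ h.choose) else 0)
    (fun gg => RingQuot.mkAlgHom k (URel k Γ g' χ' a' lam') (Tgen k Γ m gg)))

variable {g' : Fin m → Γ} {χ' : Fin m → Γ →* kˣ} {a' : Fin m → Fin m → ℤ}
  {lam' : Fin m → Fin m → k} {t : Fin m → Fin θ}

lemma phiAux_X_mem (ht : Function.Injective t) (i : Fin m) :
    phiAux g' χ' a' lam' t (Xgen k Γ (t i)) =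
      RingQuot.mkAlgHom k (URel k Γ g' χ' a' lam') (Xgen k Γ i) := by
  have hex : ∃ i', t i' = t i := ⟨i, rfl⟩
  simp only [phiAux, Xgen, FreeAlgebra.lift_ι_apply, Sum.elim_inl, dif_pos hex]
  have : hex.choose = i := ht hex.choose_spec
  rw [this]

lemma phiAux_X_not {κ : Fin θ} (hκ : ¬ ∃ i, t i = κ) :
    phiAux g' χ' a' lam' t (Xgen k Γ κ) = 0 := by
  simp only [phiAux, Xgen, FreeAlgebra.lift_ι_apply, Sum.elim_inl, dif_neg hκ]

lemma phiAux_T (gg : Γ) :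
    phiAux g' χ' a' lam' t (Tgen k Γ θ gg) =
      RingQuot.mkAlgHom k (URel k Γ g' χ' a' lam') (Tgen k Γ m gg) := by
  simp only [phiAux, Tgen, FreeAlgebra.lift_ι_apply, Sum.elim_inr]

lemma phiAux_rel (ha : ∀ i j, i ≠ j → a i j ≤ 0) (ht : Function.Injective t)
    (hzero : ∀ i j, ¬ (dynkinGraph a).Reachable i j →
      ((¬ ∃ i', t i' = i) ∨ (¬ ∃ j', t j' = j)) → lam i j = 0)
    (lam' : Fin m → Fin m → k)
    (hlam'def : ∀ i j, lam' i j =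
      if (dynkinGraph fun i' j' => a (t i') (t j')).Reachable i j then 0
      else if (dynkinGraph a).Reachable (t i) (t j) then 0
      else lam (t i) (t j)) :
    ∀ ⦃x y⦄, URel k Γ g χ a lam x y →
      phiAux (fun i => g (t i)) (fun i => χ (t i)) (fun i j => a (t i) (t j)) lam' t x =
      phiAux (fun i => g (t i)) (fun i => χ (t i)) (fun i j => a (t i) (t j)) lam' t y := by
  set φ := phiAux (k := k) (Γ := Γ) (fun i => g (t i)) (fun i => χ (t i))
    (fun i j => a (t i) (t j)) lam' t with hφ
  set F := RingQuot.mkAlgHom k (URel k Γ (fun i => g (t i)) (fun i => χ (t i))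
    (fun i j => a (t i) (t j)) lam') with hFdef
  intro x y hxy
  induction hxy with
  | group_mul g₁ g₂ =>
      rw [map_mul, phiAux_T, phiAux_T, phiAux_T]
      exact aux_mk_T_mul _ _ _ _ g₁ g₂
  | group_one =>
      rw [phiAux_T, map_one]
      exact aux_mk_T_one _ _ _ _
  | group_action gg κ =>
      rw [map_mul, map_smul, map_mul, phiAux_T]
      by_cases hκ : ∃ i', t i' = κ
      · obtain ⟨i', rfl⟩ := hκ
        rw [phiAux_X_mem ht]
        exact aux_mk_TX _ _ _ _ gg i'
      · rw [phiAux_X_not hκ]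
        simp
  | serre i j hne hsim =>
      rw [map_zero]
      have hple : a i j ≤ 0 := ha i j hne
      obtain ⟨p, hp⟩ : ∃ p, (1 - a i j).toNat = p + 1 := ⟨(- a i j).toNat, by omega⟩
      by_cases hi : ∃ i', t i' = i
      · obtain ⟨i', rfl⟩ := hi
        by_cases hj : ∃ j', t j' = j
        · obtain ⟨j', rfl⟩ := hj
          have hiter : ∀ (N : ℕ) (z : FreeAlgebra k (Fin θ ⊕ Γ))
              (w : FreeAlgebra k (Fin m ⊕ Γ)), φ z = F w →
              φ ((adc k Γ g (t i'))^[N] z) =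
                F ((adc k Γ (fun x => g (t x)) i')^[N] w) := by
            intro N
            induction N with
            | zero => intro z w h; simpa using h
            | succ N ihN =>
                intro z w h
                rw [Function.iterate_succ_apply', Function.iterate_succ_apply']
                have hzw := ihN z w h
                simp only [adc, map_sub, map_mul]
                rw [phiAux_X_mem ht, phiAux_T, phiAux_T, hzw]
          have hbase : φ (Xgen k Γ (t j')) = F (Xgen k Γ j') := phiAux_X_mem ht j'
          rw [hiter _ _ _ hbase]
          by_cases hreach : (dynkinGraph fun x y => a (t x) (t y)).Reachable i' j'
          · have hne' : i' ≠ j' := fun e => hne (congrArg t e)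
            exact (RingQuot.mkAlgHom_rel k (URel.serre i' j' hne' hreach)).trans (map_zero _)
          · have ha0 : a (t i') (t j') = 0 := by
              by_contra hne0
              exact hreach (SimpleGraph.Adj.reachable
                (aux_adj_of_ne (fun e => hne (congrArg t e)) hne0))
            have hone : (1 - a (t i') (t j')).toNat = 1 := by rw [ha0]; rfl
            rw [hone, Function.iterate_one]
            have hl0 : lam' i' j' = 0 := by
              rw [hlam'def, if_neg hreach, if_pos hsim]
            exact aux_mk_adc_zero _ _ _ _ i' j' hreach hl0
        · have hz : ∀ N, φ ((adc k Γ g (t i'))^[N] (Xgen k Γ j)) = 0 := by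
            intro N
            induction N with
            | zero => exact phiAux_X_not hj
            | succ N ih =>
                rw [Function.iterate_succ_apply']
                simp only [adc, map_sub, map_mul]
                rw [ih]
                simp
          exact hz _
      · rw [hp, Function.iterate_succ_apply']
        simp only [adc, map_sub, map_mul]
        rw [phiAux_X_not hi]
        simp
  | link i j hnsim =>
      by_cases hi : ∃ i', t i' = i
      · obtain ⟨i', rfl⟩ := hi
        by_cases hj : ∃ j', t j' = j
        · obtain ⟨j', rfl⟩ := hj
          have hreach' : ¬ (dynkinGraph fun x y => a (t x) (t y)).Reachable i' j' :=
            fun h => hnsim (aux_reach_map ht h)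
          have hl : lam' i' j' = lam (t i') (t j') := by
            rw [hlam'def, if_neg hreach', if_neg hnsim]
          have hrel := RingQuot.mkAlgHom_rel k (URel.link (k := k) (Γ := Γ)
            (g := fun x => g (t x)) (χ := fun x => χ (t x))
            (a := fun x y => a (t x) (t y)) (lam := lam') i' j' hreach')
          rw [map_sub, map_mul, map_smul, map_mul, map_smul, map_sub, map_one, hl] at hrel
          rw [map_sub, map_mul, map_smul, map_mul, map_smul, map_sub, map_one,
            phiAux_X_mem ht, phiAux_X_mem ht, phiAux_T]
          exact hrel
        · have h0 : lam (t i') j = 0 := hzero _ _ hnsim (Or.inr hj)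
          rw [h0, zero_smul, map_zero, map_sub, map_mul, map_smul, map_mul,
            phiAux_X_not hj]
          simp
      · have h0 : lam i j = 0 := hzero _ _ hnsim (Or.inl hi)
        rw [h0, zero_smul, map_zero, map_sub, map_mul, map_smul, map_mul,
          phiAux_X_not hi]
        simp

end AuxProof13

open scoped Classical in
theorem statement13 {k : Type*} [Field k] [IsAlgClosed k] [CharZero k]
    {Γ : Type*} [CommGroup Γ] {θ : ℕ}
    (g : Fin θ → Γ) (χ : Fin θ → Γ →* kˣ) (a : Fin θ → Fin θ → ℤ)
    (lam : Fin θ → Fin θ → k)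
    (hD : IsCartanDatum g χ a) (hlam : IsLinkingFamily g χ a lam)
    (n : ℕ) (hn : 1 ≤ n) (t : Fin (2 * n) → Fin θ) (ht : Function.Injective t)
    (hlinked : ∀ i j, Linked g χ a lam i j ↔
      ∃ r : Fin n, (i = t (finL r) ∧ j = t (finR r)) ∨ (i = t (finR r) ∧ j = t (finL r)))
    (lam' : Fin (2 * n) → Fin (2 * n) → k)
    (hlam'def : ∀ i j, lam' i j =
      if (dynkinGraph fun i' j' => a (t i') (t j')).Reachable i j then 0
      else if (dynkinGraph a).Reachable (t i) (t j) then 0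
      else lam (t i) (t j)) :
    IsCartanDatum (fun i => g (t i)) (fun i => χ (t i)) (fun i j => a (t i) (t j)) ∧
    IsLinkingFamily (fun i => g (t i)) (fun i => χ (t i)) (fun i j => a (t i) (t j)) lam' ∧
    ∃ π : UAlg k Γ g χ a lam →ₐ[k]
        UAlg k Γ (fun i => g (t i)) (fun i => χ (t i)) (fun i j => a (t i) (t j)) lam',
      Function.Surjective π ∧
      (∀ i : Fin (2 * n),
        π (RingQuot.mkAlgHom k (URel k Γ g χ a lam) (Xgen k Γ (t i))) =
          RingQuot.mkAlgHom k
            (URel k Γ (fun i' => g (t i')) (fun i' => χ (t i')) (fun i' j' => a (t i') (t j')) lam')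
            (Xgen k Γ i)) ∧
      (∀ κ : Fin θ, κ ∉ Set.range t →
        π (RingQuot.mkAlgHom k (URel k Γ g χ a lam) (Xgen k Γ κ)) = 0) ∧
      (∀ gg : Γ,
        π (RingQuot.mkAlgHom k (URel k Γ g χ a lam) (Tgen k Γ θ gg)) =
          RingQuot.mkAlgHom k
            (URel k Γ (fun i' => g (t i')) (fun i' => χ (t i')) (fun i' j' => a (t i') (t j')) lam')
            (Tgen k Γ (2 * n) gg)) := by
  classical
  obtain ⟨⟨hdiag, hoff, hziff, d, hd, hsym, hpos⟩, hq, hq1⟩ := hD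
  have hzero : ∀ i j, ¬ (dynkinGraph a).Reachable i j →
      ((¬ ∃ i', t i' = i) ∨ (¬ ∃ j', t j' = j)) → lam i j = 0 := by
    intro i j hnr hor
    by_contra h0
    have hgχ : ¬(g i * g j = 1 ∨ χ i * χ j ≠ 1) := fun hh => h0 (hlam.2 i j hnr hh)
    push_neg at hgχ
    have hlk : Linked g χ a lam i j := ⟨⟨hnr, hgχ.1, hgχ.2⟩, h0⟩
    obtain ⟨r, hr | hr⟩ := (hlinked i j).mp hlk
    · rcases hor with h | h
      · exact h ⟨finL r, hr.1.symm⟩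
      · exact h ⟨finR r, hr.2.symm⟩
    · rcases hor with h | h
      · exact h ⟨finR r, hr.1.symm⟩
      · exact h ⟨finL r, hr.2.symm⟩
  refine ⟨⟨⟨fun i => hdiag (t i), fun i j hij => hoff _ _ (fun e => hij (ht e)),
      fun i j => hziff _ _, fun i => d (t i), fun i => hd _, fun i j => hsym _ _,
      aux_posDef_submatrix hpos ht⟩, fun i j => hq _ _, fun i => hq1 _⟩, ?_, ?_⟩
  · constructor
    · intro i j hreach'
      by_cases hbig : (dynkinGraph a).Reachable (t i) (t j)
      · have h1 : lam' i j = 0 := by rw [hlam'def, if_neg hreach', if_pos hbig]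
        have h2 : lam' j i = 0 := by
          rw [hlam'def, if_neg (fun h => hreach' h.symm), if_pos hbig.symm]
        rw [h1, h2, mul_zero]
      · have h1 : lam' i j = lam (t i) (t j) := by rw [hlam'def, if_neg hreach', if_neg hbig]
        have h2 : lam' j i = lam (t j) (t i) := by
          rw [hlam'def, if_neg (fun h => hreach' h.symm), if_neg (fun h => hbig h.symm)]
        rw [h1, h2]
        exact hlam.1 _ _ hbig
    · intro i j hreach' hor
      by_cases hbig : (dynkinGraph a).Reachable (t i) (t j)
      · rw [hlam'def, if_neg hreach', if_pos hbig]
      · rw [hlam'def, if_neg hreach', if_neg hbig]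
        exact hlam.2 _ _ hbig hor
  · refine ⟨RingQuot.liftAlgHom k ⟨phiAux (fun i => g (t i)) (fun i => χ (t i))
      (fun i j => a (t i) (t j)) lam' t,
      phiAux_rel g χ a lam hoff ht hzero lam' hlam'def⟩, ?_, ?_, ?_, ?_⟩
    · intro y
      obtain ⟨w, rfl⟩ := RingQuot.mkAlgHom_surjective k
        (URel k Γ (fun i => g (t i)) (fun i => χ (t i)) (fun i j => a (t i) (t j)) lam') y
      induction w using FreeAlgebra.induction with
      | grade0 r =>
          exact ⟨algebraMap k _ r, by rw [AlgHom.commutes, AlgHom.commutes]⟩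
      | grade1 s =>
          rcases s with i' | gg
          · refine ⟨RingQuot.mkAlgHom k (URel k Γ g χ a lam) (Xgen k Γ (t i')), ?_⟩
            rw [RingQuot.liftAlgHom_mkAlgHom_apply, phiAux_X_mem ht]
            rfl
          · refine ⟨RingQuot.mkAlgHom k (URel k Γ g χ a lam) (Tgen k Γ θ gg), ?_⟩
            rw [RingQuot.liftAlgHom_mkAlgHom_apply, phiAux_T]
            rfl
      | mul x y hx hy =>
          obtain ⟨vx, hvx⟩ := hx
          obtain ⟨vy, hvy⟩ := hy
          exact ⟨vx * vy, by rw [map_mul, hvx, hvy, ← map_mul]⟩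
      | add x y hx hy =>
          obtain ⟨vx, hvx⟩ := hx
          obtain ⟨vy, hvy⟩ := hy
          exact ⟨vx + vy, by rw [map_add, hvx, hvy, ← map_add]⟩
    · intro i
      rw [RingQuot.liftAlgHom_mkAlgHom_apply, phiAux_X_mem ht]
    · intro κ hκ
      rw [RingQuot.liftAlgHom_mkAlgHom_apply, phiAux_X_not (fun h => hκ h)]
    · intro gg
      rw [RingQuot.liftAlgHom_mkAlgHom_apply, phiAux_T]
end
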